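/- arXiv:1109.4570 — 2 statements merged into one kernel-verified Lean document; each statement's English description precedes it below -/
import Mathlib

section
/- Preservation of Curry types by the interpretation: if Γ ⊢λ M : A in the Curry type assignment system for lambda terms, then ⊢ ⟦M⟧α : Γ ⊢ α:A in the simple context assignment system for the X-calculus. -/
set_option maxHeartbeats 1000000

/-! ## The X-calculus: syntax -/

inductive Net : Type
  | cap  (x a : ℕ)                        -- ⟨x.α⟩
  | exp  (x : ℕ) (P : Net) (b a : ℕ)      -- x̂P b̂·a  (binds x and b in P)
  | imp  (P : Net) (b y x : ℕ) (Q : Net)  -- P b̂[y]x̂Q (binds b in P and x in Q)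
  | cut  (P : Net) (a x : ℕ) (Q : Net)    -- P â†x̂Q  (binds a in P and x in Q)
  | cutL (P : Net) (a x : ℕ) (Q : Net)    -- left-activated cut
  | cutR (P : Net) (a x : ℕ) (Q : Net)    -- right-activated cut

namespace Net

/-- free sockets -/
def fs : Net → Finset ℕ
  | cap x _ => {x}
  | exp x P _ _ => P.fs \ {x}
  | imp P _ y x Q => P.fs ∪ {y} ∪ (Q.fs \ {x})
  | cut P _ x Q => P.fs ∪ (Q.fs \ {x})
  | cutL P _ x Q => P.fs ∪ (Q.fs \ {x})
  | cutR P _ x Q => P.fs ∪ (Q.fs \ {x})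

/-- free plugs -/
def fp : Net → Finset ℕ
  | cap _ a => {a}
  | exp _ P b a => (P.fp \ {b}) ∪ {a}
  | imp P b _ _ Q => (P.fp \ {b}) ∪ Q.fp
  | cut P a _ Q => (P.fp \ {a}) ∪ Q.fp
  | cutL P a _ Q => (P.fp \ {a}) ∪ Q.fp
  | cutR P a _ Q => (P.fp \ {a}) ∪ Q.fp

/-- `P` introduces the socket `x` -/
def introS (P : Net) (x : ℕ) : Prop :=
  (∃ a, P = cap x a) ∨
  (∃ Q b z R, P = imp Q b x z R ∧ x ∉ Q.fs ∧ x ∉ R.fs \ {z})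

/-- `P` introduces the plug `a` -/
def introP (P : Net) (a : ℕ) : Prop :=
  (∃ x, P = cap x a) ∨
  (∃ y Q b, P = exp y Q b a ∧ a ∉ Q.fp \ {b})

/-- rename the free occurrences of the plug `a` to `c` -/
def renP : Net → ℕ → ℕ → Net
  | cap x d, a, c => cap x (if d = a then c else d)
  | exp y P b d, a, c =>
      exp y (if b = a then P else P.renP a c) b (if d = a then c else d)
  | imp P b y x Q, a, c =>
      imp (if b = a then P else P.renP a c) b y x (Q.renP a c)
  | cut P d x Q, a, c =>
      cut (if d = a then P else P.renP a c) d x (Q.renP a c)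
  | cutL P d x Q, a, c =>
      cutL (if d = a then P else P.renP a c) d x (Q.renP a c)
  | cutR P d x Q, a, c =>
      cutR (if d = a then P else P.renP a c) d x (Q.renP a c)

/-- rename the free occurrences of the socket `x` to `z` -/
def renS : Net → ℕ → ℕ → Net
  | cap y a, x, z => cap (if y = x then z else y) a
  | exp y P b d, x, z => exp y (if y = x then P else P.renS x z) b d
  | imp P b y w Q, x, z =>
      imp (P.renS x z) b (if y = x then z else y) w (if w = x then Q else Q.renS x z)
  | cut P a w Q, x, z =>
      cut (P.renS x z) a w (if w = x then Q else Q.renS x z)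
  | cutL P a w Q, x, z =>
      cutL (P.renS x z) a w (if w = x then Q else Q.renS x z)
  | cutR P a w Q, x, z =>
      cutR (P.renS x z) a w (if w = x then Q else Q.renS x z)

end Net

/-! ## Reduction (full, call-by-name, call-by-value) -/

inductive Mode : Type
  | full | cbn | cbv

/-- side condition for left activation -/
def Mode.actLCond : Mode → Net → ℕ → ℕ → Net → Prop
  | .full, P, a, _, _ => ¬ P.introP a
  | .cbv,  P, a, _, _ => ¬ P.introP a
  | .cbn,  P, a, x, Q => ¬ P.introP a ∧ Q.introS x

/-- side condition for right activation -/
def Mode.actRCond : Mode → Net → ℕ → ℕ → Net → Prop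
  | .full, _, _, x, Q => ¬ Q.introS x
  | .cbn,  _, _, x, Q => ¬ Q.introS x
  | .cbv,  P, a, x, Q => P.introP a ∧ ¬ Q.introS x

/-- Reduction: the reflexive, transitive, compatible closure of the rules.
`Red .full` is →, `Red .cbn` is →n, `Red .cbv` is →v. -/
inductive Red : Mode → Net → Net → Prop
  -- logical rules
  | log_ax : ∀ (m : Mode) (y a x b : ℕ),
      Red m (.cut (.cap y a) a x (.cap x b)) (.cap y b)
  | log_exp : ∀ (m : Mode) (y : ℕ) (P : Net) (b a x g : ℕ),
      a ∉ P.fp \ {b} →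
      Red m (.cut (.exp y P b a) a x (.cap x g)) (.exp y P b g)
  | log_imp : ∀ (m : Mode) (y a : ℕ) (Q : Net) (b x z : ℕ) (R : Net),
      x ∉ Q.fs → x ∉ R.fs \ {z} →
      Red m (.cut (.cap y a) a x (.imp Q b x z R)) (.imp Q b y z R)
  | exp_imp_v : ∀ (m : Mode) (y : ℕ) (P : Net) (b a : ℕ) (Q : Net) (g x z : ℕ) (R : Net),
      m ≠ .cbn → a ∉ P.fp \ {b} → x ∉ Q.fs → x ∉ R.fs \ {z} →
      Red m (.cut (.exp y P b a) a x (.imp Q g x z R))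
            (.cut Q g y (.cut P b z R))
  | exp_imp_n : ∀ (m : Mode) (y : ℕ) (P : Net) (b a : ℕ) (Q : Net) (g x z : ℕ) (R : Net),
      m ≠ .cbv → a ∉ P.fp \ {b} → x ∉ Q.fs → x ∉ R.fs \ {z} →
      Red m (.cut (.exp y P b a) a x (.imp Q g x z R))
            (.cut (.cut Q g y P) b z R)
  -- activation
  | actL : ∀ (m : Mode) (P : Net) (a x : ℕ) (Q : Net),
      m.actLCond P a x Q → Red m (.cut P a x Q) (.cutL P a x Q)
  | actR : ∀ (m : Mode) (P : Net) (a x : ℕ) (Q : Net),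
      m.actRCond P a x Q → Red m (.cut P a x Q) (.cutR P a x Q)
  -- left propagation
  | dL : ∀ (m : Mode) (y a x : ℕ) (P : Net),
      Red m (.cutL (.cap y a) a x P) (.cut (.cap y a) a x P)
  | capL : ∀ (m : Mode) (y b a x : ℕ) (P : Net),
      b ≠ a → Red m (.cutL (.cap y b) a x P) (.cap y b)
  | expOutsL : ∀ (m : Mode) (y : ℕ) (Q : Net) (b a x : ℕ) (P : Net) (g : ℕ),
      g ∉ Q.fp → g ∉ P.fp → g ≠ a →
      Red m (.cutL (.exp y Q b a) a x P)
            (.cut (.exp y (.cutL Q a x P) b g) g x P)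
  | expInsL : ∀ (m : Mode) (y : ℕ) (Q : Net) (b g a x : ℕ) (P : Net),
      g ≠ a →
      Red m (.cutL (.exp y Q b g) a x P) (.exp y (.cutL Q a x P) b g)
  | impPropL : ∀ (m : Mode) (Q : Net) (b z y : ℕ) (R : Net) (a x : ℕ) (P : Net),
      Red m (.cutL (.imp Q b z y R) a x P)
            (.imp (.cutL Q a x P) b z y (.cutL R a x P))
  | cutPropL : ∀ (m : Mode) (Q : Net) (b y : ℕ) (R : Net) (a x : ℕ) (P : Net),
      Red m (.cutL (.cut Q b y R) a x P)
            (.cut (.cutL Q a x P) b y (.cutL R a x P))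
  -- right propagation
  | dR : ∀ (m : Mode) (P : Net) (a x b : ℕ),
      Red m (.cutR P a x (.cap x b)) (.cut P a x (.cap x b))
  | capR : ∀ (m : Mode) (P : Net) (a x y b : ℕ),
      y ≠ x → Red m (.cutR P a x (.cap y b)) (.cap y b)
  | expPropR : ∀ (m : Mode) (P : Net) (a x y : ℕ) (Q : Net) (b g : ℕ),
      Red m (.cutR P a x (.exp y Q b g)) (.exp y (.cutR P a x Q) b g)
  | impOutsR : ∀ (m : Mode) (P : Net) (a x : ℕ) (Q : Net) (b y : ℕ) (R : Net) (z : ℕ),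
      z ∉ P.fs → z ∉ Q.fs → z ∉ R.fs → z ≠ x →
      Red m (.cutR P a x (.imp Q b x y R))
            (.cut P a z (.imp (.cutR P a x Q) b z y (.cutR P a x R)))
  | impInsR : ∀ (m : Mode) (P : Net) (a x : ℕ) (Q : Net) (b z y : ℕ) (R : Net),
      z ≠ x →
      Red m (.cutR P a x (.imp Q b z y R))
            (.imp (.cutR P a x Q) b z y (.cutR P a x R))
  | cutPropR : ∀ (m : Mode) (P : Net) (a x : ℕ) (Q : Net) (b y : ℕ) (R : Net),
      Red m (.cutR P a x (.cut Q b y R))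
            (.cut (.cutR P a x Q) b y (.cutR P a x R))
  -- compatible closure
  | congExp : ∀ (m : Mode) (x : ℕ) (P P' : Net) (b a : ℕ),
      Red m P P' → Red m (.exp x P b a) (.exp x P' b a)
  | congImp1 : ∀ (m : Mode) (P P' : Net) (b y x : ℕ) (Q : Net),
      Red m P P' → Red m (.imp P b y x Q) (.imp P' b y x Q)
  | congImp2 : ∀ (m : Mode) (P : Net) (b y x : ℕ) (Q Q' : Net),
      Red m Q Q' → Red m (.imp P b y x Q) (.imp P b y x Q')
  | congCut1 : ∀ (m : Mode) (P P' : Net) (a x : ℕ) (Q : Net),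
      Red m P P' → Red m (.cut P a x Q) (.cut P' a x Q)
  | congCut2 : ∀ (m : Mode) (P : Net) (a x : ℕ) (Q Q' : Net),
      Red m Q Q' → Red m (.cut P a x Q) (.cut P a x Q')
  | congCutL1 : ∀ (m : Mode) (P P' : Net) (a x : ℕ) (Q : Net),
      Red m P P' → Red m (.cutL P a x Q) (.cutL P' a x Q)
  | congCutL2 : ∀ (m : Mode) (P : Net) (a x : ℕ) (Q Q' : Net),
      Red m Q Q' → Red m (.cutL P a x Q) (.cutL P a x Q')
  | congCutR1 : ∀ (m : Mode) (P P' : Net) (a x : ℕ) (Q : Net),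
      Red m P P' → Red m (.cutR P a x Q) (.cutR P' a x Q)
  | congCutR2 : ∀ (m : Mode) (P : Net) (a x : ℕ) (Q Q' : Net),
      Red m Q Q' → Red m (.cutR P a x Q) (.cutR P a x Q')
  | refl : ∀ (m : Mode) (P : Net), Red m P P
  | trans : ∀ (m : Mode) (P Q R : Net), Red m P Q → Red m Q R → Red m P R

/-! ## Simple types and the simple context assignment system -/

inductive STy : Type
  | var (n : ℕ)
  | arr (A B : STy)

abbrev SCtx := ℕ → Option STy

/-- simple context assignment ⊢ P : Γ ⊢ Δ -/
inductive SDer : Net → SCtx → SCtx → Prop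
  | ax : ∀ (G D : SCtx) (y a : ℕ) (A : STy),
      G y = some A → D a = some A → SDer (.cap y a) G D
  | expR : ∀ (P : Net) (G D : SCtx) (x a b : ℕ) (A B : STy),
      SDer P (Function.update G x (some A)) (Function.update D a (some B)) →
      SDer (.exp x P a b) G (Function.update D b (some (.arr A B)))
  | impL : ∀ (P Q : Net) (G D : SCtx) (a y x : ℕ) (A B : STy),
      SDer P G (Function.update D a (some A)) →
      SDer Q (Function.update G x (some B)) D →
      SDer (.imp P a y x Q) (Function.update G y (some (.arr A B))) D
  | cut : ∀ (P Q : Net) (G D : SCtx) (a x : ℕ) (A : STy),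
      SDer P G (Function.update D a (some A)) →
      SDer Q (Function.update G x (some A)) D →
      SDer (.cut P a x Q) G D
  | cutL : ∀ (P Q : Net) (G D : SCtx) (a x : ℕ) (A : STy),
      SDer P G (Function.update D a (some A)) →
      SDer Q (Function.update G x (some A)) D →
      SDer (.cutL P a x Q) G D
  | cutR : ∀ (P Q : Net) (G D : SCtx) (a x : ℕ) (A : STy),
      SDer P G (Function.update D a (some A)) →
      SDer Q (Function.update G x (some A)) D →
      SDer (.cutR P a x Q) G D

/-! ## Intersection-union types -/

inductive ITy : Type
  | var (n : ℕ)
  | top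
  | bot
  | arr (A B : ITy)
  | inter (A B : ITy)
  | union (A B : ITy)

/-- A₁ ∩ … ∩ Aₙ (⊤ for the empty intersection) -/
def interList : List ITy → ITy
  | [] => .top
  | [A] => A
  | A :: B :: rest => .inter A (interList (B :: rest))

/-- A₁ ∪ … ∪ Aₙ (⊥ for the empty union) -/
def unionList : List ITy → ITy
  | [] => .bot
  | [A] => A
  | A :: B :: rest => .union A (unionList (B :: rest))

/-- `A` is an intersection type (a genuine intersection, possibly the empty one ⊤) -/
def ITy.isInterTy (A : ITy) : Prop := A = .top ∨ ∃ B C, A = .inter B C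

/-- `A` is a union type (a genuine union, possibly the empty one ⊥) -/
def ITy.isUnionTy (A : ITy) : Prop := A = .bot ∨ ∃ B C, A = .union B C

/-- the preorder ≤ on intersection-union types -/
inductive TLe : ITy → ITy → Prop
  | refl : ∀ A, TLe A A
  | trans : ∀ A B C, TLe A B → TLe B C → TLe A C
  | interLe1 : ∀ A B, TLe (.inter A B) A
  | interLe2 : ∀ A B, TLe (.inter A B) B
  | interGlb : ∀ A B C, TLe C A → TLe C B → TLe C (.inter A B)
  | leTop : ∀ A, TLe A .top
  | unionLe1 : ∀ A B, TLe A (.union A B)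
  | unionLe2 : ∀ A B, TLe B (.union A B)
  | unionLub : ∀ A B C, TLe A C → TLe B C → TLe (.union A B) C
  | botLe : ∀ A, TLe .bot A

abbrev ICtx := ℕ → Option ITy

/-- the context Γ ∩ x:A -/
def ctxInter (G : ICtx) (x : ℕ) (A : ITy) : ICtx :=
  Function.update G x (some (match G x with
    | none => A
    | some B => ITy.inter A B))

/-- the context α:A ∪ Δ -/
def ctxUnion (D : ICtx) (a : ℕ) (A : ITy) : ICtx :=
  Function.update D a (some (match D a with
    | none => A
    | some B => ITy.union A B))

/-- intersection-union context assignment ⊢X P : Γ ⊢ Δ -/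
inductive XDer : Net → ICtx → ICtx → Prop
  | ax : ∀ (G D : ICtx) (y a : ℕ) (A : ITy),
      G y = some A → D a = some A → XDer (.cap y a) G D
  | cut : ∀ (P Q : Net) (G D : ICtx) (a x : ℕ) (A : ITy),
      XDer P G (Function.update D a (some A)) →
      XDer Q (Function.update G x (some A)) D →
      XDer (.cut P a x Q) G D
  | cutL : ∀ (P Q : Net) (G D : ICtx) (a x : ℕ) (A : ITy),
      XDer P G (Function.update D a (some A)) →
      XDer Q (Function.update G x (some A)) D →
      XDer (.cutL P a x Q) G D
  | cutR : ∀ (P Q : Net) (G D : ICtx) (a x : ℕ) (A : ITy),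
      XDer P G (Function.update D a (some A)) →
      XDer Q (Function.update G x (some A)) D →
      XDer (.cutR P a x Q) G D
  | impL : ∀ (P Q : Net) (G D : ICtx) (a y x : ℕ) (A B : ITy),
      XDer P G (Function.update D a (some A)) →
      XDer Q (Function.update G x (some B)) D →
      XDer (.imp P a y x Q) (ctxInter G y (.arr A B)) D
  | expR : ∀ (P : Net) (G D : ICtx) (x a b : ℕ) (A B : ITy),
      XDer P (Function.update G x (some A)) (Function.update D a (some B)) →
      XDer (.exp x P a b) G (ctxUnion D b (.arr A B))
  | interR : ∀ (P : Net) (G D : ICtx) (a : ℕ) (As : List ITy),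
      (∀ A ∈ As, XDer P G (Function.update D a (some A))) →
      XDer P G (Function.update D a (some (interList As)))
  | unionL : ∀ (P : Net) (G D : ICtx) (x : ℕ) (As : List ITy),
      (∀ A ∈ As, XDer P (Function.update G x (some A)) D) →
      XDer P (Function.update G x (some (unionList As))) D
  | interE : ∀ (P : Net) (G D : ICtx) (a : ℕ) (As : List ITy) (A : ITy),
      XDer P G (Function.update D a (some (interList As))) → A ∈ As →
      XDer P G (Function.update D a (some A))
  | unionE : ∀ (P : Net) (G D : ICtx) (x : ℕ) (As : List ITy) (A : ITy),
      XDer P (Function.update G x (some (unionList As))) D → A ∈ As →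
      XDer P (Function.update G x (some A)) D

/-- proper derivations ⊢p P : Γ ⊢ Δ : derivations whose final rule is
neither (∩R) nor (∪L) (including their nullary instances). -/
inductive XDerP : Net → ICtx → ICtx → Prop
  | ax : ∀ (G D : ICtx) (y a : ℕ) (A : ITy),
      G y = some A → D a = some A → XDerP (.cap y a) G D
  | cut : ∀ (P Q : Net) (G D : ICtx) (a x : ℕ) (A : ITy),
      XDer P G (Function.update D a (some A)) →
      XDer Q (Function.update G x (some A)) D →
      XDerP (.cut P a x Q) G D
  | cutL : ∀ (P Q : Net) (G D : ICtx) (a x : ℕ) (A : ITy),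
      XDer P G (Function.update D a (some A)) →
      XDer Q (Function.update G x (some A)) D →
      XDerP (.cutL P a x Q) G D
  | cutR : ∀ (P Q : Net) (G D : ICtx) (a x : ℕ) (A : ITy),
      XDer P G (Function.update D a (some A)) →
      XDer Q (Function.update G x (some A)) D →
      XDerP (.cutR P a x Q) G D
  | impL : ∀ (P Q : Net) (G D : ICtx) (a y x : ℕ) (A B : ITy),
      XDer P G (Function.update D a (some A)) →
      XDer Q (Function.update G x (some B)) D →
      XDerP (.imp P a y x Q) (ctxInter G y (.arr A B)) D
  | expR : ∀ (P : Net) (G D : ICtx) (x a b : ℕ) (A B : ITy),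
      XDer P (Function.update G x (some A)) (Function.update D a (some B)) →
      XDerP (.exp x P a b) G (ctxUnion D b (.arr A B))
  | interE : ∀ (P : Net) (G D : ICtx) (a : ℕ) (As : List ITy) (A : ITy),
      XDer P G (Function.update D a (some (interList As))) → A ∈ As →
      XDerP P G (Function.update D a (some A))
  | unionE : ∀ (P : Net) (G D : ICtx) (x : ℕ) (As : List ITy) (A : ITy),
      XDer P (Function.update G x (some (unionList As))) D → A ∈ As →
      XDerP P (Function.update G x (some A)) D

/-- the CBN system ⊢N -/
inductive XDerN : Net → ICtx → ICtx → Prop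
  | ax : ∀ (G D : ICtx) (y a : ℕ) (A : ITy),
      G y = some A → D a = some A → XDerN (.cap y a) G D
  -- (cut), for inactive and right-activated cuts only
  | cut : ∀ (P Q : Net) (G D : ICtx) (a x : ℕ) (A : ITy),
      XDerN P G (Function.update D a (some A)) →
      XDerN Q (Function.update G x (some A)) D →
      XDerN (.cut P a x Q) G D
  | cutR : ∀ (P Q : Net) (G D : ICtx) (a x : ℕ) (A : ITy),
      XDerN P G (Function.update D a (some A)) →
      XDerN Q (Function.update G x (some A)) D →
      XDerN (.cutR P a x Q) G D
  -- (†L), for left-activated cuts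
  | dagL : ∀ (P Q : Net) (G D : ICtx) (a x : ℕ) (A : ITy),
      ¬ A.isInterTy → Q.introS x →
      XDerN P G (Function.update D a (some A)) →
      XDerN Q (Function.update G x (some A)) D →
      XDerN (.cutL P a x Q) G D
  | impL : ∀ (P Q : Net) (G D : ICtx) (a y x : ℕ) (A B : ITy),
      XDerN P G (Function.update D a (some A)) →
      XDerN Q (Function.update G x (some B)) D →
      XDerN (.imp P a y x Q) (ctxInter G y (.arr A B)) D
  | expR : ∀ (P : Net) (G D : ICtx) (x a b : ℕ) (A B : ITy),
      XDerN P (Function.update G x (some A)) (Function.update D a (some B)) →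
      XDerN (.exp x P a b) G (ctxUnion D b (.arr A B))
  | interR : ∀ (P : Net) (G D : ICtx) (a : ℕ) (As : List ITy),
      (∀ A ∈ As, XDerN P G (Function.update D a (some A))) →
      XDerN P G (Function.update D a (some (interList As)))
  -- (∪L), restricted to nets that introduce the socket that gets the union type
  | unionL : ∀ (P : Net) (G D : ICtx) (x : ℕ) (As : List ITy),
      P.introS x →
      (∀ A ∈ As, XDerN P (Function.update G x (some A)) D) →
      XDerN P (Function.update G x (some (unionList As))) D
  | interE : ∀ (P : Net) (G D : ICtx) (a : ℕ) (As : List ITy) (A : ITy),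
      XDerN P G (Function.update D a (some (interList As))) → A ∈ As →
      XDerN P G (Function.update D a (some A))
  | unionE : ∀ (P : Net) (G D : ICtx) (x : ℕ) (As : List ITy) (A : ITy),
      XDerN P (Function.update G x (some (unionList As))) D → A ∈ As →
      XDerN P (Function.update G x (some A)) D

/-- the CBV system ⊢V -/
inductive XDerV : Net → ICtx → ICtx → Prop
  | ax : ∀ (G D : ICtx) (y a : ℕ) (A : ITy),
      G y = some A → D a = some A → XDerV (.cap y a) G D
  -- (cut), for inactive and left-activated cuts only
  | cut : ∀ (P Q : Net) (G D : ICtx) (a x : ℕ) (A : ITy),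
      XDerV P G (Function.update D a (some A)) →
      XDerV Q (Function.update G x (some A)) D →
      XDerV (.cut P a x Q) G D
  | cutL : ∀ (P Q : Net) (G D : ICtx) (a x : ℕ) (A : ITy),
      XDerV P G (Function.update D a (some A)) →
      XDerV Q (Function.update G x (some A)) D →
      XDerV (.cutL P a x Q) G D
  -- (†R), for right-activated cuts
  | dagR : ∀ (P Q : Net) (G D : ICtx) (a x : ℕ) (A : ITy),
      ¬ A.isUnionTy → P.introP a →
      XDerV P G (Function.update D a (some A)) →
      XDerV Q (Function.update G x (some A)) D →
      XDerV (.cutR P a x Q) G D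
  | impL : ∀ (P Q : Net) (G D : ICtx) (a y x : ℕ) (A B : ITy),
      XDerV P G (Function.update D a (some A)) →
      XDerV Q (Function.update G x (some B)) D →
      XDerV (.imp P a y x Q) (ctxInter G y (.arr A B)) D
  | expR : ∀ (P : Net) (G D : ICtx) (x a b : ℕ) (A B : ITy),
      XDerV P (Function.update G x (some A)) (Function.update D a (some B)) →
      XDerV (.exp x P a b) G (ctxUnion D b (.arr A B))
  -- (∩R), restricted to nets that introduce the plug that gets the intersection type
  | interR : ∀ (P : Net) (G D : ICtx) (a : ℕ) (As : List ITy),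
      P.introP a →
      (∀ A ∈ As, XDerV P G (Function.update D a (some A))) →
      XDerV P G (Function.update D a (some (interList As)))
  | unionL : ∀ (P : Net) (G D : ICtx) (x : ℕ) (As : List ITy),
      (∀ A ∈ As, XDerV P (Function.update G x (some A)) D) →
      XDerV P (Function.update G x (some (unionList As))) D
  | interE : ∀ (P : Net) (G D : ICtx) (a : ℕ) (As : List ITy) (A : ITy),
      XDerV P G (Function.update D a (some (interList As))) → A ∈ As →
      XDerV P G (Function.update D a (some A))
  | unionE : ∀ (P : Net) (G D : ICtx) (x : ℕ) (As : List ITy) (A : ITy),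
      XDerV P (Function.update G x (some (unionList As))) D → A ∈ As →
      XDerV P (Function.update G x (some A)) D

/-! ## Lambda calculus and its interpretation in the X-calculus -/

inductive Lam : Type
  | var (x : ℕ)
  | lam (x : ℕ) (M : Lam)
  | app (M N : Lam)

namespace Lam

def fv : Lam → Finset ℕ
  | var x => {x}
  | lam x M => M.fv \ {x}
  | app M N => M.fv ∪ N.fv

def subst : Lam → ℕ → Lam → Lam
  | var y, x, N => if y = x then N else var y
  | lam y M, x, N => if y = x then lam y M else lam y (M.subst x N)
  | app M1 M2, x, N => app (M1.subst x N) (M2.subst x N)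

end Lam

/-- one-step β-reduction: the compatible closure of (λx.M)N →β M[N/x] -/
inductive Beta : Lam → Lam → Prop
  | beta : ∀ (x : ℕ) (M N : Lam), Beta (.app (.lam x M) N) (M.subst x N)
  | congLam : ∀ (x : ℕ) (M M' : Lam), Beta M M' → Beta (.lam x M) (.lam x M')
  | congApp1 : ∀ (M M' N : Lam), Beta M M' → Beta (.app M N) (.app M' N)
  | congApp2 : ∀ (M N N' : Lam), Beta N N' → Beta (.app M N) (.app M N')

/-- the interpretation ⟦M⟧α of lambda terms as X-nets -/
def interp : Lam → ℕ → Net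
  | .var x, a => .cap x a
  | .lam x M, a => .exp x (interp M (a + 1)) (a + 1) a
  | .app M N, a =>
      .cut (interp M (a + 1)) (a + 1) (((M.fv ∪ N.fv).sup id) + 1)
        (.imp (interp N (a + 2)) (a + 2) (((M.fv ∪ N.fv).sup id) + 1)
          (((M.fv ∪ N.fv).sup id) + 2)
          (.cap (((M.fv ∪ N.fv).sup id) + 2) a))

/-- Curry type assignment for the lambda calculus -/
inductive LDer : SCtx → Lam → STy → Prop
  | ax : ∀ (G : SCtx) (x : ℕ) (A : STy), G x = some A → LDer G (.var x) A
  | arrI : ∀ (G : SCtx) (x : ℕ) (M : Lam) (A B : STy),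
      LDer (Function.update G x (some A)) M B → LDer G (.lam x M) (.arr A B)
  | arrE : ∀ (G : SCtx) (M N : Lam) (A B : STy),
      LDer G M (.arr A B) → LDer G N A → LDer G (.app M N) B

/-- intersection type assignment ⊢∩ for the lambda calculus -/
inductive IDer : ICtx → Lam → ITy → Prop
  | ax : ∀ (G : ICtx) (x : ℕ) (A : ITy), G x = some A → IDer G (.var x) A
  | interI : ∀ (G : ICtx) (M : Lam) (As : List ITy),
      (∀ A ∈ As, IDer G M A) → IDer G M (interList As)
  | interE : ∀ (G : ICtx) (M : Lam) (As : List ITy) (A : ITy),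
      IDer G M (interList As) → A ∈ As → IDer G M A
  | arrI : ∀ (G : ICtx) (x : ℕ) (M : Lam) (A B : ITy),
      IDer (Function.update G x (some A)) M B → IDer G (.lam x M) (.arr A B)
  | arrE : ∀ (G : ICtx) (M N : Lam) (A B : ITy),
      IDer G M (.arr A B) → IDer G N A → IDer G (.app M N) B

theorem interp_preserves_curry_aux :
    ∀ (G : SCtx) (M : Lam) (A : STy), LDer G M A →
      ∀ (a : ℕ) (D : SCtx), D a = some A → SDer (interp M a) G D := by
  intro G M A h
  induction h with
  | ax G x A hx =>
      intro a D hD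
      exact SDer.ax _ _ _ _ _ hx hD
  | arrI G x M A B h ih =>
      intro a D hD
      have hDeq : D = Function.update D a (some (STy.arr A B)) := by
        funext c
        by_cases hc : c = a
        · subst hc; simp [hD]
        · simp [Function.update, hc]
      rw [hDeq]
      exact SDer.expR _ _ _ _ _ _ _ _ (ih (a + 1) _ (by simp))
  | arrE G M N A B hM hN ihM ihN =>
      intro a D hD
      apply SDer.cut _ _ _ _ _ _ (STy.arr A B)
      · exact ihM (a + 1) _ (by simp)
      · apply SDer.impL
        · exact ihN (a + 2) _ (by simp)
        · exact SDer.ax _ _ _ _ _ (by simp) hD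

/-- Preservation of Curry types by the interpretation: if Γ ⊢λ M : A in the
Curry system for lambda terms, then ⊢ ⟦M⟧α : Γ ⊢ α:A in the simple context assignment
system for the X-calculus. -/
theorem interp_preserves_curry_types :
    ∀ (G : SCtx) (M : Lam) (A : STy) (a : ℕ),
      LDer G M A →
      SDer (interp M a) G (Function.update (fun _ => (none : Option STy)) a (some A)) := by
  intro G M A a h
  exact interp_preserves_curry_aux G M A h a _ (by simp)
end

section
/- Preservation of intersection types by the interpretation: if Γ ⊢∩ M : A in the intersection type assignment system for lambda terms, then ⊢X ⟦M⟧α : Γ ⊢ α:A in the intersection-union context assignment system for the X-calculus. -/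
set_option maxHeartbeats 1000000

theorem interp_main_aux :
    ∀ (G : ICtx) (M : Lam) (A : ITy), IDer G M A →
      ∀ (G' : ICtx), (∀ x ∈ M.fv, G x = G' x) →
      ∀ (a : ℕ) (D : ICtx), XDer (interp M a) G' (Function.update D a (some A)) := by
  intro G M A h
  induction h with
  | ax G x A hx =>
      intro G' hG a D
      exact XDer.ax _ _ x a A (by rw [← hG x (by simp [Lam.fv])]; exact hx) (by simp)
  | interI G M As hAs ih =>
      intro G' hG a D
      exact XDer.interR _ _ _ _ _ (fun A hA => ih A hA G' hG a D)
  | interE G M As A hAs hA ih =>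
      intro G' hG a D
      exact XDer.interE _ _ _ _ _ _ (ih G' hG a D) hA
  | arrI G x M A B h ih =>
      intro G' hG a D
      show XDer (.exp x (interp M (a+1)) (a+1) a) G' (Function.update D a (some (.arr A B)))
      have hh := XDer.expR (interp M (a+1)) G' (Function.update D a none) x (a+1) a A B ?_
      · convert hh using 1
        simp [ctxUnion]
      · apply ih
        intro z hz
        by_cases hzx : z = x
        · simp [Function.update, hzx]
        · simp only [Function.update, hzx]
          simp only [eq_rec_constant, dif_neg hzx]
          exact hG z (by simp [Lam.fv, hz, hzx])
  | arrE G M N A B hM hN ihM ihN =>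
      intro G' hG a D
      have key : ∀ z ∈ M.fv ∪ N.fv, z ≠ ((M.fv ∪ N.fv).sup id) + 1 := by
        intro z hz
        have := Finset.le_sup (f := id) hz
        simp only [id] at this
        omega
      show XDer (.cut (interp M (a+1)) (a+1) (((M.fv ∪ N.fv).sup id) + 1)
            (.imp (interp N (a+2)) (a+2) (((M.fv ∪ N.fv).sup id) + 1)
              (((M.fv ∪ N.fv).sup id) + 2)
              (.cap (((M.fv ∪ N.fv).sup id) + 2) a))) G' (Function.update D a (some B))
      apply XDer.cut _ _ _ _ (a+1) (((M.fv ∪ N.fv).sup id) + 1) (.arr A B)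
      · exact ihM G' (fun x hx => hG x (by simp [Lam.fv, hx])) (a+1)
          (Function.update D a (some B))
      · have himp := XDer.impL (interp N (a+2))
            (.cap (((M.fv ∪ N.fv).sup id) + 2) a)
            (Function.update G' (((M.fv ∪ N.fv).sup id) + 1) none)
            (Function.update D a (some B)) (a+2) (((M.fv ∪ N.fv).sup id) + 1)
            (((M.fv ∪ N.fv).sup id) + 2) A B ?_ ?_
        · convert himp using 1
          simp [ctxInter]
        · apply ihN
          intro z hz
          have hzw : z ≠ ((M.fv ∪ N.fv).sup id) + 1 :=
            key z (by simp [hz])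
          rw [Function.update_of_ne hzw]
          exact hG z (by simp [Lam.fv, hz])
        · exact XDer.ax _ _ _ a B (by simp) (by simp)

/-- Preservation of intersection types by the interpretation: if Γ ⊢∩ M : A in
the intersection type assignment system for lambda terms, then ⊢X ⟦M⟧α : Γ ⊢ α:A in the
intersection-union context assignment system for the X-calculus. -/
theorem interp_preserves_intersection_types :
    ∀ (G : ICtx) (M : Lam) (A : ITy) (a : ℕ),
      IDer G M A →
      XDer (interp M a) G (Function.update (fun _ => (none : Option ITy)) a (some A)) := by
  intro G M A a h
  exact interp_main_aux G M A h G (fun _ _ => rfl) a (fun _ => none)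
end
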